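/- arXiv:2503.23426 — 3 statements merged into one kernel-verified Lean document; each statement's English description precedes it below -/
import Mathlib

section
/- Let 𝒞 : Ω × ℝ^d → ℝ^d be a random map on a probability space such that for some constants δ ∈ (0,1] and r > 0, E‖𝒞(u)/r − u‖² ≤ (1−δ)‖u‖² for every u ∈ ℝ^d. Let ω ∈ (0, 1/r] and set c₁ = δωr/2. Then for every fixed x, y ∈ ℝ^d and every square-integrable random vector x⁺ in ℝ^d (defined on the same probability space, possibly depending on the randomness of 𝒞), E‖x⁺ − (y + ω𝒞(x − y))‖² ≤ (1 + c₁⁻¹) E‖x⁺ − x‖² + (1 − c₁ − 2c₁²) ‖x − y‖². -/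
open MeasureTheory

lemma aux_young {E : Type*} [NormedAddCommGroup E] [InnerProductSpace ℝ E]
    (t : ℝ) (ht : 0 < t) (a b : E) :
    ‖a + b‖ ^ 2 ≤ (1 + t⁻¹) * ‖a‖ ^ 2 + (1 + t) * ‖b‖ ^ 2 := by
  have h1 := norm_add_sq_real a b
  have h2 := real_inner_le_norm a b
  have ht' : t * t⁻¹ = 1 := mul_inv_cancel₀ ht.ne'
  have ht2 : 0 < t⁻¹ := inv_pos.2 ht
  have key : 0 ≤ t⁻¹ * (‖a‖ - t * ‖b‖) ^ 2 := by positivity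
  nlinarith [key, ht', norm_nonneg a, norm_nonneg b]

lemma aux_convex {E : Type*} [NormedAddCommGroup E] [InnerProductSpace ℝ E]
    (s : ℝ) (hs0 : 0 ≤ s) (hs1 : s ≤ 1) (u v : E) :
    ‖(1 - s) • u + s • v‖ ^ 2 ≤ (1 - s) * ‖u‖ ^ 2 + s * ‖v‖ ^ 2 := by
  have h1 := norm_add_sq_real ((1 - s) • u) (s • v)
  rw [norm_smul, norm_smul, real_inner_smul_left, real_inner_smul_right,
    Real.norm_eq_abs, Real.norm_eq_abs, abs_of_nonneg (by linarith), abs_of_nonneg hs0] at h1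
  have h2 := real_inner_le_norm u v
  have h3 : (1 - s) * s * inner ℝ u v ≤ (1 - s) * s * (‖u‖ * ‖v‖) :=
    mul_le_mul_of_nonneg_left h2 (mul_nonneg (by linarith) hs0)
  nlinarith [mul_nonneg (mul_nonneg (sub_nonneg.2 hs1) hs0) (sq_nonneg (‖u‖ - ‖v‖)),
    norm_nonneg u, norm_nonneg v]

lemma aux_three (a b c v : ℝ) (hv : 0 ≤ v) (h : v ≤ a + b + c) :
    v ^ 2 ≤ 3 * a ^ 2 + 3 * b ^ 2 + 3 * c ^ 2 := by
  nlinarith [sq_nonneg (a - b), sq_nonneg (a - c), sq_nonneg (b - c), sq_nonneg (a + b + c)]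

/-- Compression error contraction: if the random map `𝒞` satisfies the
generalized contractive compressor property with constants `δ ∈ (0,1]`, `r > 0`, and
`ω₀ ∈ (0, 1/r]`, `c₁ = δω₀r/2`, then for fixed `x, y` and any square-integrable random
vector `x⁺` (possibly depending on the randomness of `𝒞`),
`E‖x⁺ − (y + ω₀𝒞(x−y))‖² ≤ (1 + c₁⁻¹) E‖x⁺ − x‖² + (1 − c₁ − 2c₁²)‖x − y‖²`. -/
theorem stmt11 {d : ℕ} {Ω : Type*} [MeasurableSpace Ω]
    (P : Measure Ω) [IsProbabilityMeasure P]
    (C : Ω → EuclideanSpace ℝ (Fin d) → EuclideanSpace ℝ (Fin d))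
    (δ r : ℝ) (hδ : δ ∈ Set.Ioc (0 : ℝ) 1) (hr : 0 < r)
    (hCmeas : ∀ u, AEStronglyMeasurable (fun ω => C ω u) P)
    (hA1 : ∀ u : EuclideanSpace ℝ (Fin d),
      ∫ ω, ‖r⁻¹ • C ω u - u‖ ^ 2 ∂P ≤ (1 - δ) * ‖u‖ ^ 2)
    (ω₀ : ℝ) (hω₀ : ω₀ ∈ Set.Ioc (0 : ℝ) (1 / r))
    (c₁ : ℝ) (hc₁ : c₁ = δ * ω₀ * r / 2)
    (x y : EuclideanSpace ℝ (Fin d))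
    (xp : Ω → EuclideanSpace ℝ (Fin d)) (hxp : MemLp xp 2 P) :
    ∫ ω, ‖xp ω - (y + ω₀ • C ω (x - y))‖ ^ 2 ∂P ≤
      (1 + c₁⁻¹) * ∫ ω, ‖xp ω - x‖ ^ 2 ∂P + (1 - c₁ - 2 * c₁ ^ 2) * ‖x - y‖ ^ 2 := by
  obtain ⟨hδ0, hδ1⟩ := hδ
  obtain ⟨hω0, hω1⟩ := hω₀
  have hs1 : ω₀ * r ≤ 1 := by
    rw [le_div_iff₀ hr] at hω1; exact hω1
  have hs0 : 0 < ω₀ * r := mul_pos hω0 hr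
  have hc₁0 : 0 < c₁ := by rw [hc₁]; positivity
  have hc₁half : c₁ ≤ 1 / 2 := by
    rw [hc₁]; nlinarith [hs0]
  -- integrability of `‖xp - x‖²` and `‖xp - y‖²`
  have hIx : Integrable (fun ω => ‖xp ω - x‖ ^ 2) P :=
    (hxp.sub (memLp_const x)).norm.integrable_sq
  have hIy : Integrable (fun ω => ‖xp ω - y‖ ^ 2) P :=
    (hxp.sub (memLp_const y)).norm.integrable_sq
  by_cases hInt2 : Integrable (fun ω => ‖r⁻¹ • C ω (x - y) - (x - y)‖ ^ 2) P
  · -- main case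
    have hpt : ∀ ω, ‖xp ω - (y + ω₀ • C ω (x - y))‖ ^ 2 ≤
        (1 + c₁⁻¹) * ‖xp ω - x‖ ^ 2 +
        (1 + c₁) * ((1 - ω₀ * r) * ‖x - y‖ ^ 2 + (ω₀ * r) * ‖r⁻¹ • C ω (x - y) - (x - y)‖ ^ 2) := by
      intro ω
      have e1 : xp ω - (y + ω₀ • C ω (x - y)) =
          (xp ω - x) + ((x - y) - ω₀ • C ω (x - y)) := by module
      have hsm : (ω₀ * r) • (r⁻¹ • C ω (x - y)) = ω₀ • C ω (x - y) := by
        rw [smul_smul, show ω₀ * r * r⁻¹ = ω₀ by field_simp]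
      have e2 : (x - y) - ω₀ • C ω (x - y) =
          (1 - ω₀ * r) • (x - y) + (ω₀ * r) • ((x - y) - r⁻¹ • C ω (x - y)) := by
        rw [smul_sub ((ω₀ * r)) (x - y), hsm]; module
      calc ‖xp ω - (y + ω₀ • C ω (x - y))‖ ^ 2
          = ‖(xp ω - x) + ((x - y) - ω₀ • C ω (x - y))‖ ^ 2 := by rw [e1]
        _ ≤ (1 + c₁⁻¹) * ‖xp ω - x‖ ^ 2 + (1 + c₁) * ‖(x - y) - ω₀ • C ω (x - y)‖ ^ 2 :=
            aux_young c₁ hc₁0 _ _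
        _ ≤ (1 + c₁⁻¹) * ‖xp ω - x‖ ^ 2 +
            (1 + c₁) * ((1 - ω₀ * r) * ‖x - y‖ ^ 2 +
              (ω₀ * r) * ‖(x - y) - r⁻¹ • C ω (x - y)‖ ^ 2) := by
            have h := aux_convex (ω₀ * r) hs0.le hs1 (x - y) ((x - y) - r⁻¹ • C ω (x - y))
            rw [e2]
            nlinarith [h]
        _ = (1 + c₁⁻¹) * ‖xp ω - x‖ ^ 2 +
            (1 + c₁) * ((1 - ω₀ * r) * ‖x - y‖ ^ 2 +
              (ω₀ * r) * ‖r⁻¹ • C ω (x - y) - (x - y)‖ ^ 2) := by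
            rw [norm_sub_rev (x - y) (r⁻¹ • C ω (x - y))]
    have hI1 : Integrable (fun ω => (1 + c₁⁻¹) * ‖xp ω - x‖ ^ 2) P := hIx.const_mul _
    have hI4 : Integrable (fun ω => (ω₀ * r) * ‖r⁻¹ • C ω (x - y) - (x - y)‖ ^ 2) P :=
      hInt2.const_mul _
    have hI3 : Integrable (fun _ : Ω => (1 - ω₀ * r) * ‖x - y‖ ^ 2) P := integrable_const _
    have hI34 : Integrable (fun ω => (1 - ω₀ * r) * ‖x - y‖ ^ 2 +
        (ω₀ * r) * ‖r⁻¹ • C ω (x - y) - (x - y)‖ ^ 2) P := hI3.add hI4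
    have hI2 : Integrable (fun ω => (1 + c₁) * ((1 - ω₀ * r) * ‖x - y‖ ^ 2 +
        (ω₀ * r) * ‖r⁻¹ • C ω (x - y) - (x - y)‖ ^ 2)) P := hI34.const_mul _
    have hmono : ∫ ω, ‖xp ω - (y + ω₀ • C ω (x - y))‖ ^ 2 ∂P ≤
        ∫ ω, ((1 + c₁⁻¹) * ‖xp ω - x‖ ^ 2 +
          (1 + c₁) * ((1 - ω₀ * r) * ‖x - y‖ ^ 2 +
            (ω₀ * r) * ‖r⁻¹ • C ω (x - y) - (x - y)‖ ^ 2)) ∂P :=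
      integral_mono_of_nonneg (Filter.Eventually.of_forall fun ω => by positivity)
        (hI1.add hI2) (Filter.Eventually.of_forall hpt)
    have hsplit : ∫ ω, ((1 + c₁⁻¹) * ‖xp ω - x‖ ^ 2 +
          (1 + c₁) * ((1 - ω₀ * r) * ‖x - y‖ ^ 2 +
            (ω₀ * r) * ‖r⁻¹ • C ω (x - y) - (x - y)‖ ^ 2)) ∂P =
        (1 + c₁⁻¹) * (∫ ω, ‖xp ω - x‖ ^ 2 ∂P) +
        (1 + c₁) * ((1 - ω₀ * r) * ‖x - y‖ ^ 2 +
          (ω₀ * r) * ∫ ω, ‖r⁻¹ • C ω (x - y) - (x - y)‖ ^ 2 ∂P) := by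
      rw [integral_add hI1 hI2, integral_const_mul, integral_const_mul,
        integral_add hI3 hI4, integral_const_mul, integral_const_mul, integral_const]
      simp
    have hJ : ∫ ω, ‖r⁻¹ • C ω (x - y) - (x - y)‖ ^ 2 ∂P ≤ (1 - δ) * ‖x - y‖ ^ 2 := hA1 (x - y)
    have hfinal : (1 + c₁) * ((1 - ω₀ * r) * ‖x - y‖ ^ 2 +
          (ω₀ * r) * ∫ ω, ‖r⁻¹ • C ω (x - y) - (x - y)‖ ^ 2 ∂P)
        ≤ (1 - c₁ - 2 * c₁ ^ 2) * ‖x - y‖ ^ 2 := by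
      have key : 0 ≤ (1 + c₁) * (ω₀ * r) *
          ((1 - δ) * ‖x - y‖ ^ 2 - ∫ ω, ‖r⁻¹ • C ω (x - y) - (x - y)‖ ^ 2 ∂P) :=
        mul_nonneg (by positivity) (by linarith)
      subst hc₁
      nlinarith [key]
    calc ∫ ω, ‖xp ω - (y + ω₀ • C ω (x - y))‖ ^ 2 ∂P
        ≤ (1 + c₁⁻¹) * (∫ ω, ‖xp ω - x‖ ^ 2 ∂P) +
          (1 + c₁) * ((1 - ω₀ * r) * ‖x - y‖ ^ 2 +
            (ω₀ * r) * ∫ ω, ‖r⁻¹ • C ω (x - y) - (x - y)‖ ^ 2 ∂P) := by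
          rw [← hsplit]; exact hmono
      _ ≤ (1 + c₁⁻¹) * (∫ ω, ‖xp ω - x‖ ^ 2 ∂P) + (1 - c₁ - 2 * c₁ ^ 2) * ‖x - y‖ ^ 2 := by
          linarith
  · -- degenerate case: the LHS integrand is not integrable, so the LHS integral is 0
    have hnot : ¬ Integrable (fun ω => ‖xp ω - (y + ω₀ • C ω (x - y))‖ ^ 2) P := by
      intro hL
      apply hInt2
      have hmeas2 : AEStronglyMeasurable (fun ω => ‖r⁻¹ • C ω (x - y) - (x - y)‖ ^ 2) P :=
        (((((hCmeas (x - y)).const_smul r⁻¹).sub aestronglyMeasurable_const)).norm).pow 2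
      have hD : Integrable (fun ω =>
          3 * (r⁻¹ * ω₀⁻¹ * ‖xp ω - (y + ω₀ • C ω (x - y))‖) ^ 2
          + 3 * (r⁻¹ * ω₀⁻¹ * ‖xp ω - y‖) ^ 2 + 3 * ‖x - y‖ ^ 2) P := by
        have h1 : Integrable (fun ω =>
            3 * (r⁻¹ * ω₀⁻¹) ^ 2 * ‖xp ω - (y + ω₀ • C ω (x - y))‖ ^ 2) P := hL.const_mul _
        have h2 : Integrable (fun ω => 3 * (r⁻¹ * ω₀⁻¹) ^ 2 * ‖xp ω - y‖ ^ 2) P :=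
          hIy.const_mul _
        have := (h1.add h2).add (integrable_const (3 * ‖x - y‖ ^ 2))
        exact this.congr (Filter.Eventually.of_forall fun ω => by simp only [Pi.add_apply]; ring)
      refine hD.mono' hmeas2 (Filter.Eventually.of_forall fun ω => ?_)
      rw [Real.norm_eq_abs, abs_of_nonneg (by positivity)]
      have hKbd : ω₀ * ‖C ω (x - y)‖ ≤ ‖xp ω - y‖ + ‖xp ω - (y + ω₀ • C ω (x - y))‖ := by
        have e : ω₀ • C ω (x - y) =
            (xp ω - y) - (xp ω - (y + ω₀ • C ω (x - y))) := by module
        calc ω₀ * ‖C ω (x - y)‖ = ‖ω₀ • C ω (x - y)‖ := by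
              rw [norm_smul, Real.norm_eq_abs, abs_of_pos hω0]
          _ = ‖(xp ω - y) - (xp ω - (y + ω₀ • C ω (x - y)))‖ := congrArg norm e
          _ ≤ _ := norm_sub_le _ _
      have hK' : ‖C ω (x - y)‖ ≤
          ω₀⁻¹ * (‖xp ω - y‖ + ‖xp ω - (y + ω₀ • C ω (x - y))‖) := by
        rw [inv_mul_eq_div, le_div_iff₀ hω0]
        linarith
      have hrpos : (0:ℝ) < r⁻¹ := inv_pos.2 hr
      have hV : ‖r⁻¹ • C ω (x - y) - (x - y)‖ ≤ r⁻¹ * ‖C ω (x - y)‖ + ‖x - y‖ := by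
        calc ‖r⁻¹ • C ω (x - y) - (x - y)‖ ≤ ‖r⁻¹ • C ω (x - y)‖ + ‖x - y‖ := norm_sub_le _ _
          _ = r⁻¹ * ‖C ω (x - y)‖ + ‖x - y‖ := by
              rw [norm_smul, Real.norm_eq_abs, abs_of_pos hrpos]
      have h5 : ‖r⁻¹ • C ω (x - y) - (x - y)‖ ≤
          r⁻¹ * ω₀⁻¹ * ‖xp ω - (y + ω₀ • C ω (x - y))‖ + r⁻¹ * ω₀⁻¹ * ‖xp ω - y‖ + ‖x - y‖ := by
        have h6 := mul_le_mul_of_nonneg_left hK' hrpos.le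
        linarith [hV, h6]
      exact aux_three _ _ _ _ (norm_nonneg _) h5
    rw [integral_undef hnot]
    have h1 : 0 ≤ ∫ ω, ‖xp ω - x‖ ^ 2 ∂P := integral_nonneg fun ω => by positivity
    have h2 : (0:ℝ) ≤ 1 - c₁ - 2 * c₁ ^ 2 := by nlinarith
    have h3 : (0:ℝ) ≤ 1 + c₁⁻¹ := by positivity
    have h4 : (0:ℝ) ≤ ‖x - y‖ ^ 2 := sq_nonneg _
    nlinarith [mul_nonneg h3 h1, mul_nonneg h2 h4]
end

section
/- Let f : ℝ^p → ℝ be differentiable with ℓ-Lipschitz gradient (ℓ > 0), let x ∈ ℝ^p and α > 0, and let g be a square-integrable random vector in ℝ^p with mean m = E[g]. Then E[f(x − αg)] ≤ f(x) − (α/4)‖m‖² − (α/4)‖∇f(x)‖² + (α/2)‖∇f(x) − m‖² + (α²ℓ/2) E‖g‖². -/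
open MeasureTheory
open scoped InnerProductSpace

section Descent
variable {F : Type*} [NormedAddCommGroup F] [InnerProductSpace ℝ F] [CompleteSpace F]

lemma hasDerivAt_line (f : F → ℝ) (hdiff : Differentiable ℝ f) (x v : F) (t : ℝ) :
    HasDerivAt (fun s : ℝ => f (x + s • v)) ⟪gradient f (x + t • v), v⟫_ℝ t := by
  have hγ : HasDerivAt (fun s : ℝ => x + s • v) v t := by
    simpa using (hasDerivAt_id t).smul_const v
  have hf := (hdiff (x + t • v)).hasGradientAt
  have := (hf.hasFDerivAt.comp_hasDerivAt t hγ)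
  exact this

/-- Descent lemma. -/
lemma descent (f : F → ℝ) (ℓ : ℝ) (_hℓ : 0 ≤ ℓ) (hdiff : Differentiable ℝ f)
    (hlip : ∀ u v : F, ‖gradient f u - gradient f v‖ ≤ ℓ * ‖u - v‖) (x v : F) :
    f (x + v) ≤ f x + ⟪gradient f x, v⟫_ℝ + ℓ / 2 * ‖v‖ ^ 2 := by
  set ψ : ℝ → ℝ := fun t => f (x + t • v) - t * ⟪gradient f x, v⟫_ℝ - ℓ / 2 * t ^ 2 * ‖v‖ ^ 2
    with hψ
  have hψd : ∀ t : ℝ, HasDerivAt ψ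
      (⟪gradient f (x + t • v), v⟫_ℝ - ⟪gradient f x, v⟫_ℝ - ℓ * t * ‖v‖ ^ 2) t := by
    intro t
    have h1 := hasDerivAt_line f hdiff x v t
    have h2 : HasDerivAt (fun t : ℝ => t * ⟪gradient f x, v⟫_ℝ) ⟪gradient f x, v⟫_ℝ t := by
      simpa using (hasDerivAt_id t).mul_const ⟪gradient f x, v⟫_ℝ
    have h3 : HasDerivAt (fun t : ℝ => ℓ / 2 * t ^ 2 * ‖v‖ ^ 2) (ℓ * t * ‖v‖ ^ 2) t := by
      have := ((hasDerivAt_pow 2 t).const_mul (ℓ / 2)).mul_const (‖v‖ ^ 2)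
      exact this.congr_deriv (by ring)
    exact (h1.sub h2).sub h3
  have key : ψ 1 ≤ ψ 0 := by
    have hanti : AntitoneOn ψ (Set.Icc 0 1) := by
      apply antitoneOn_of_deriv_nonpos (convex_Icc 0 1)
      · exact Continuous.continuousOn (by rw [hψ]; have := hdiff.continuous; fun_prop)
      · intro t ht
        exact ((hψd t).differentiableAt).differentiableWithinAt
      · intro t ht
        rw [interior_Icc] at ht
        rw [(hψd t).deriv]
        have hcs : ⟪gradient f (x + t • v) - gradient f x, v⟫_ℝ ≤
            ‖gradient f (x + t • v) - gradient f x‖ * ‖v‖ :=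
          real_inner_le_norm _ _
        have hl : ‖gradient f (x + t • v) - gradient f x‖ ≤ ℓ * (t * ‖v‖) := by
          have := hlip (x + t • v) x
          simpa [norm_smul, abs_of_pos ht.1, mul_assoc] using this
        have ht0 : (0:ℝ) < t := ht.1
        nlinarith [inner_sub_left (𝕜 := ℝ) (gradient f (x + t • v)) (gradient f x) v,
          norm_nonneg v, norm_nonneg (gradient f (x + t • v) - gradient f x),
          mul_nonneg (norm_nonneg v) (norm_nonneg v)]
    exact hanti (by norm_num) (by norm_num) (by norm_num)
  simp only [hψ, one_smul, zero_smul, add_zero, one_pow, one_mul, zero_mul, mul_zero,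
    sub_zero, zero_pow] at key
  linarith [key]

end Descent

/-- Descent inequality for a stochastic gradient step: if `f : ℝ^p → ℝ`
is differentiable with `ℓ`-Lipschitz gradient, `α > 0`, and `g` is a square-integrable
random vector with mean `m`, then
`E[f(x − αg)] ≤ f(x) − (α/4)‖m‖² − (α/4)‖∇f(x)‖² + (α/2)‖∇f(x) − m‖² + (α²ℓ/2)E‖g‖²`. -/
theorem stmt13 {p : ℕ} {Ω : Type*} [MeasurableSpace Ω]
    (P : Measure Ω) [IsProbabilityMeasure P]
    (f : EuclideanSpace ℝ (Fin p) → ℝ) (ℓ : ℝ) (hℓ : 0 < ℓ)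
    (hdiff : Differentiable ℝ f)
    (hlip : ∀ u v : EuclideanSpace ℝ (Fin p),
      ‖gradient f u - gradient f v‖ ≤ ℓ * ‖u - v‖)
    (x : EuclideanSpace ℝ (Fin p)) (α : ℝ) (hα : 0 < α)
    (g : Ω → EuclideanSpace ℝ (Fin p)) (hg : MemLp g 2 P)
    (m : EuclideanSpace ℝ (Fin p)) (hm : m = ∫ ω, g ω ∂P) :
    ∫ ω, f (x - α • g ω) ∂P ≤
      f x - (α / 4) * ‖m‖ ^ 2 - (α / 4) * ‖gradient f x‖ ^ 2
        + (α / 2) * ‖gradient f x - m‖ ^ 2 + (α ^ 2 * ℓ / 2) * ∫ ω, ‖g ω‖ ^ 2 ∂P := by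
  set G := gradient f x with hG
  -- pointwise upper bound
  have hup : ∀ ω, f (x - α • g ω) ≤ f x - α * ⟪G, g ω⟫_ℝ + α ^ 2 * ℓ / 2 * ‖g ω‖ ^ 2 := by
    intro ω
    have h := descent f ℓ hℓ.le hdiff hlip x (-(α • g ω))
    have e1 : x + -(α • g ω) = x - α • g ω := by abel
    have e2 : ⟪G, -(α • g ω)⟫_ℝ = -(α * ⟪G, g ω⟫_ℝ) := by
      rw [inner_neg_right, real_inner_smul_right]
    have e3 : ‖-(α • g ω)‖ ^ 2 = α ^ 2 * ‖g ω‖ ^ 2 := by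
      rw [norm_neg, norm_smul, Real.norm_eq_abs, mul_pow, sq_abs]
    rw [e1, e2, e3] at h
    linarith
  -- pointwise lower bound
  have hlo : ∀ ω, f x - α * ⟪G, g ω⟫_ℝ - 3 * ℓ / 2 * (α ^ 2 * ‖g ω‖ ^ 2)
      ≤ f (x - α • g ω) := by
    intro ω
    set y := x - α • g ω with hy
    have h := descent f ℓ hℓ.le hdiff hlip y (α • g ω)
    have e1 : y + α • g ω = x := by rw [hy]; abel
    rw [e1] at h
    have e2 : ⟪gradient f y, α • g ω⟫_ℝ
        = ⟪G, α • g ω⟫_ℝ + ⟪gradient f y - G, α • g ω⟫_ℝ := by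
      rw [inner_sub_left]; ring
    have e3 : ⟪G, α • g ω⟫_ℝ = α * ⟪G, g ω⟫_ℝ := real_inner_smul_right _ _ _
    have e4 : ‖α • g ω‖ ^ 2 = α ^ 2 * ‖g ω‖ ^ 2 := by
      rw [norm_smul, Real.norm_eq_abs, mul_pow, sq_abs]
    have hcs : ⟪gradient f y - G, α • g ω⟫_ℝ ≤ ‖gradient f y - G‖ * ‖α • g ω‖ :=
      real_inner_le_norm _ _
    have hl : ‖gradient f y - G‖ ≤ ℓ * ‖α • g ω‖ := by
      have := hlip y x
      have : ‖gradient f y - G‖ ≤ ℓ * ‖y - x‖ := this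
      have e5 : y - x = -(α • g ω) := by rw [hy]; abel
      rw [e5, norm_neg] at this
      exact this
    have hn : (0:ℝ) ≤ ‖α • g ω‖ := norm_nonneg _
    nlinarith
  -- integrability facts
  have hg1 : Integrable g P := hg.integrable one_le_two
  have hsq : Integrable (fun ω => ‖g ω‖ ^ 2) P :=
    (memLp_two_iff_integrable_sq_norm hg.aestronglyMeasurable).1 hg
  have hinner : Integrable (fun ω => ⟪G, g ω⟫_ℝ) P := hg1.const_inner G
  have hrhs : Integrable (fun ω => f x - α * ⟪G, g ω⟫_ℝ + α ^ 2 * ℓ / 2 * ‖g ω‖ ^ 2) P :=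
    ((integrable_const (f x)).sub (hinner.const_mul α)).add (hsq.const_mul _)
  have hmeas : AEStronglyMeasurable (fun ω => f (x - α • g ω)) P := by
    have hc : Continuous fun y : EuclideanSpace ℝ (Fin p) => f (x - α • y) :=
      hdiff.continuous.comp (continuous_const.sub (continuous_id.const_smul α))
    exact hc.comp_aestronglyMeasurable hg.aestronglyMeasurable
  have hf_int : Integrable (fun ω => f (x - α • g ω)) P := by
    refine Integrable.mono'
      ((((integrable_const |f x|).add ((hg1.norm.const_mul (α * ‖G‖)))).add
        (hsq.const_mul (3 * ℓ / 2 * α ^ 2)))) hmeas (Filter.Eventually.of_forall fun ω => ?_)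
    have h1 := hup ω
    have h2 := hlo ω
    have h3 : |⟪G, g ω⟫_ℝ| ≤ ‖G‖ * ‖g ω‖ := abs_real_inner_le_norm _ _
    have h4 : α * |⟪G, g ω⟫_ℝ| ≤ α * (‖G‖ * ‖g ω‖) :=
      mul_le_mul_of_nonneg_left h3 hα.le
    have h5 : α * -|⟪G, g ω⟫_ℝ| ≤ α * ⟪G, g ω⟫_ℝ :=
      mul_le_mul_of_nonneg_left (neg_abs_le _) hα.le
    have h6 : α * ⟪G, g ω⟫_ℝ ≤ α * |⟪G, g ω⟫_ℝ| :=
      mul_le_mul_of_nonneg_left (le_abs_self _) hα.le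
    have h7 : (0:ℝ) ≤ ℓ * α ^ 2 * ‖g ω‖ ^ 2 :=
      mul_nonneg (mul_nonneg hℓ.le (sq_nonneg α)) (sq_nonneg _)
    simp only [Pi.add_apply]
    rw [Real.norm_eq_abs, abs_le]
    constructor
    · linarith [neg_abs_le (f x)]
    · linarith [le_abs_self (f x)]
  -- integrate
  have hint : ∫ ω, f (x - α • g ω) ∂P
      ≤ ∫ ω, (f x - α * ⟪G, g ω⟫_ℝ + α ^ 2 * ℓ / 2 * ‖g ω‖ ^ 2) ∂P :=
    integral_mono hf_int hrhs hup
  have heval : ∫ ω, (f x - α * ⟪G, g ω⟫_ℝ + α ^ 2 * ℓ / 2 * ‖g ω‖ ^ 2) ∂P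
      = f x - α * ⟪G, m⟫_ℝ + α ^ 2 * ℓ / 2 * ∫ ω, ‖g ω‖ ^ 2 ∂P := by
    rw [integral_add (by exact (integrable_const (f x)).sub (hinner.const_mul α))
        (hsq.const_mul _),
      integral_sub (integrable_const (f x)) (hinner.const_mul α),
      integral_const, integral_const_mul, integral_const_mul, integral_inner hg1, ← hm]
    simp
  rw [heval] at hint
  have hid : ‖G - m‖ ^ 2 = ‖G‖ ^ 2 - 2 * ⟪G, m⟫_ℝ + ‖m‖ ^ 2 := norm_sub_sq_real G m
  have hnn : (0:ℝ) ≤ α / 4 * ‖m‖ ^ 2 + α / 4 * ‖G‖ ^ 2 := by positivity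
  refine hint.trans ?_
  rw [hG]
  nlinarith [hid]
end

section
/- (Two-sided bounds for the Lyapunov function.) Let ϵ₁ > 0 satisfy ϵ₁ ρ₂(L) > 1, and define ε₇ = (ϵ₁ρ₂(L) − 1)/(2ϵ₁ρ₂(L)) and ε₆ = max{(1 + ϵ₁ρ₂(L))/2, (1 + ϵ₁)/2 + 1/(2ϵ₁ρ₂(L)²)}. Then for all 𝐱, 𝐰, 𝐲 ∈ ℝ^{np}, the quantity Φ = (1/2)‖𝐱‖²_𝐄 + ((1+ϵ₁)/2)‖𝐰‖²_𝐅 + 𝐱ᵀ𝐄𝐅𝐰 + ‖𝐱 − 𝐲‖² satisfies ε₇(‖𝐱‖²_𝐄 + ‖𝐰‖²_𝐅) + ‖𝐱 − 𝐲‖² ≤ Φ ≤ ε₆(‖𝐱‖²_𝐄 + ‖𝐰‖²_𝐅 + ‖𝐱 − 𝐲‖²); in particular Φ ≥ 0. -/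
open scoped BigOperators RealInnerProductSpace

noncomputable section

namespace CZSD14

/-- `ℝ^p` with the euclidean inner product. -/
abbrev Vec (p : ℕ) : Type := EuclideanSpace ℝ (Fin p)

/-- The bilinear form `xᵀ (M ⊗ I_p) w = ∑ᵢ∑ⱼ Mᵢⱼ ⟨xᵢ, wⱼ⟩` on stacked vectors. -/
def bform {n p : ℕ} (M : Matrix (Fin n) (Fin n) ℝ) (x w : Fin n → Vec p) : ℝ :=
  ∑ i, ∑ j, M i j * ⟪x i, w j⟫

/-- The weighted squared seminorm `‖x‖²_{M ⊗ I_p}`. -/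
def wnorm {n p : ℕ} (M : Matrix (Fin n) (Fin n) ℝ) (x : Fin n → Vec p) : ℝ :=
  bform M x x

/-- The squared euclidean norm of a stacked vector in `ℝ^{np}`. -/
def sqnorm {n p : ℕ} (x : Fin n → Vec p) : ℝ := ∑ i, ‖x i‖ ^ 2

/-- The projection matrix `E = Iₙ − (1/n) 𝟙ₙ𝟙ₙᵀ`. -/
def Emat (n : ℕ) : Matrix (Fin n) (Fin n) ℝ :=
  1 - (n : ℝ)⁻¹ • Matrix.of (fun _ _ => (1 : ℝ))

end CZSD14

open CZSD14

section Aux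

lemma aux_bform_spectral {n p : ℕ} (U : Matrix (Fin n) (Fin n) ℝ) (d : Fin n → ℝ)
    (X W : Fin n → Vec p) :
    bform (U * Matrix.diagonal d * U.transpose) X W
      = ∑ k, d k * ⟪∑ i, U i k • X i, ∑ j, U j k • W j⟫ := by
  have hent : ∀ i j, (U * Matrix.diagonal d * U.transpose) i j
      = ∑ l, d l * (U i l * U j l) := by
    intro i j
    rw [Matrix.mul_apply]
    simp only [Matrix.mul_diagonal, Matrix.transpose_apply]
    exact Finset.sum_congr rfl fun l _ => by ring
  have swap : ∀ (G : Fin n → Fin n → Fin n → ℝ),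
      (∑ i, ∑ j, ∑ l, G i j l) = ∑ l, ∑ i, ∑ j, G i j l := by
    intro G
    calc (∑ i, ∑ j, ∑ l, G i j l) = ∑ i, ∑ l, ∑ j, G i j l :=
          Finset.sum_congr rfl fun i _ => Finset.sum_comm
      _ = ∑ l, ∑ i, ∑ j, G i j l := Finset.sum_comm
  unfold bform
  simp only [hent, inner_sum, sum_inner, real_inner_smul_left, real_inner_smul_right,
    Finset.mul_sum, Finset.sum_mul]
  rw [swap]
  refine Finset.sum_congr rfl fun k _ => ?_
  rw [Finset.sum_comm]
  exact Finset.sum_congr rfl fun i _ => Finset.sum_congr rfl fun j _ => by ring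

lemma aux_Emat_eq {n : ℕ} (U : Matrix (Fin n) (Fin n) ℝ)
    (hUU : U * U.transpose = 1) (i0 : Fin n)
    (hq : ∀ i, U i i0 = 1 / Real.sqrt n) :
    Emat n = U * Matrix.diagonal (fun k => if k = i0 then (0:ℝ) else 1) * U.transpose := by
  have hent : ∀ i j, (U * Matrix.diagonal (fun k => if k = i0 then (0:ℝ) else 1)
      * U.transpose) i j = ∑ l, (if l = i0 then (0:ℝ) else 1) * (U i l * U j l) := by
    intro i j
    rw [Matrix.mul_apply]
    simp only [Matrix.mul_diagonal, Matrix.transpose_apply]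
    exact Finset.sum_congr rfl fun l _ => by ring
  ext i j
  rw [hent]
  have h1 : ∑ l, (if l = i0 then (0:ℝ) else 1) * (U i l * U j l)
      = (∑ l, U i l * U j l) - U i i0 * U j i0 := by
    rw [eq_sub_iff_add_eq]
    have hrepr : U i i0 * U j i0 = ∑ l, if l = i0 then U i l * U j l else 0 := by
      rw [Finset.sum_ite_eq']; simp
    rw [hrepr, ← Finset.sum_add_distrib]
    refine Finset.sum_congr rfl fun l _ => ?_
    by_cases h : l = i0 <;> simp [h]
  have h2 : (∑ l, U i l * U j l) = (1 : Matrix (Fin n) (Fin n) ℝ) i j := by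
    rw [← hUU, Matrix.mul_apply]
    simp [Matrix.transpose_apply]
  have h3 : U i i0 * U j i0 = (n : ℝ)⁻¹ := by
    rw [hq i, hq j]
    rw [div_mul_div_comm, one_mul, Real.mul_self_sqrt (Nat.cast_nonneg n), one_div]
  rw [h1, h2, h3]
  simp [Emat, Matrix.sub_apply, Matrix.smul_apply]

lemma aux_prod_spectral {n : ℕ} (U : Matrix (Fin n) (Fin n) ℝ)
    (hUorth : U.transpose * U = 1) (e f : Fin n → ℝ) :
    (U * Matrix.diagonal e * U.transpose) * (U * Matrix.diagonal f * U.transpose)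
      = U * Matrix.diagonal (fun k => e k * f k) * U.transpose := by
  have h1 : U * Matrix.diagonal e * U.transpose * (U * Matrix.diagonal f * U.transpose)
      = U * Matrix.diagonal e * (U.transpose * U) * Matrix.diagonal f * U.transpose := by
    simp only [Matrix.mul_assoc]
  rw [h1, hUorth, Matrix.mul_one, Matrix.mul_assoc U, Matrix.diagonal_mul_diagonal]

lemma aux_lower_term (ϵ ρ μ A B c δ : ℝ) (hϵ : 0 < ϵ) (hρ : 0 < ρ) (hμ : 0 < μ)
    (hμρ : μ * ρ ≤ 1) (hc : -(A * B) ≤ c)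
    (hδ : δ * (2 * ϵ * ρ) = 1) :
    (1/2 - δ) * (A ^ 2 + μ * B ^ 2) ≤ 1/2 * A ^ 2 + (1 + ϵ)/2 * (μ * B ^ 2) + μ * c := by
  have hδpos : 0 < δ := by nlinarith [mul_pos (mul_pos two_pos hϵ) hρ]
  have h1 : 2 * ϵ * ρ * (μ * (A * B)) ≤ A ^ 2 + ϵ ^ 2 * ρ * (μ * B ^ 2) := by
    nlinarith [sq_nonneg (A - ϵ * ρ * μ * B),
      mul_nonneg (mul_nonneg (mul_nonneg (sq_nonneg ϵ) hρ.le)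
        (mul_nonneg hμ.le (sq_nonneg B))) (sub_nonneg.mpr hμρ)]
  have h2 : μ * (A * B) ≤ δ * A ^ 2 + (ϵ / 2) * (μ * B ^ 2) := by
    have h3 := mul_le_mul_of_nonneg_left h1 hδpos.le
    have e1 : δ * (2 * ϵ * ρ * (μ * (A * B))) = μ * (A * B) := by
      linear_combination (μ * (A * B)) * hδ
    have e2 : δ * (A ^ 2 + ϵ ^ 2 * ρ * (μ * B ^ 2))
        = δ * A ^ 2 + (ϵ / 2) * (μ * B ^ 2) * (δ * (2 * ϵ * ρ)) := by ring
    rw [e1, e2, hδ] at h3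
    linarith
  have hmc : μ * (-(A * B)) ≤ μ * c := mul_le_mul_of_nonneg_left hc hμ.le
  nlinarith [mul_nonneg hδpos.le (mul_nonneg hμ.le (sq_nonneg B)), h2, hmc]

lemma aux_upper_term (ϵ ρ μ A B c γ ε₆ : ℝ) (hϵ : 0 < ϵ) (hρ : 0 < ρ) (hμ : 0 < μ)
    (hμρ : μ * ρ ≤ 1) (hc : c ≤ A * B)
    (hγ : γ * (2 * ϵ * ρ ^ 2) = 1)
    (hmax1 : (1 + ϵ * ρ) / 2 ≤ ε₆) (hmax2 : (1 + ϵ) / 2 + γ ≤ ε₆) :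
    1/2 * A ^ 2 + (1 + ϵ)/2 * (μ * B ^ 2) + μ * c ≤ ε₆ * (A ^ 2 + μ * B ^ 2) := by
  have hγpos : 0 < γ := by nlinarith [mul_pos (mul_pos two_pos hϵ) (mul_pos hρ hρ)]
  have h1 : 2 * ϵ * ρ ^ 2 * (μ * (A * B)) ≤ ϵ ^ 2 * ρ ^ 3 * A ^ 2 + μ * B ^ 2 := by
    nlinarith [mul_nonneg hρ.le (sq_nonneg (ϵ * ρ * A - μ * B)),
      mul_nonneg (mul_nonneg hμ.le (sq_nonneg B)) (sub_nonneg.mpr hμρ)]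
  have h2 : μ * (A * B) ≤ (ϵ * ρ / 2) * A ^ 2 + γ * (μ * B ^ 2) := by
    have h3 := mul_le_mul_of_nonneg_left h1 hγpos.le
    have e1 : γ * (2 * ϵ * ρ ^ 2 * (μ * (A * B))) = μ * (A * B) := by
      linear_combination (μ * (A * B)) * hγ
    have e2 : γ * (ϵ ^ 2 * ρ ^ 3 * A ^ 2 + μ * B ^ 2)
        = (ϵ * ρ / 2) * A ^ 2 * (γ * (2 * ϵ * ρ ^ 2)) + γ * (μ * B ^ 2) := by ring
    rw [e1, e2, hγ] at h3
    linarith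
  have hmc : μ * c ≤ μ * (A * B) := mul_le_mul_of_nonneg_left hc hμ.le
  nlinarith [h2, hmc, sq_nonneg A, mul_nonneg hμ.le (sq_nonneg B)]

end Aux


/-- Two-sided bounds for the Lyapunov function: with
`ε₇ = (ϵ₁ρ₂(L) − 1)/(2ϵ₁ρ₂(L))` and
`ε₆ = max{(1 + ϵ₁ρ₂(L))/2, (1 + ϵ₁)/2 + 1/(2ϵ₁ρ₂(L)²)}`, for all stacked vectors
`𝐱, 𝐰, 𝐲 ∈ ℝ^{np}` the quantity
`Φ = (1/2)‖𝐱‖²_𝐄 + ((1+ϵ₁)/2)‖𝐰‖²_𝐅 + 𝐱ᵀ𝐄𝐅𝐰 + ‖𝐱 − 𝐲‖²` satisfies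
`ε₇(‖𝐱‖²_𝐄 + ‖𝐰‖²_𝐅) + ‖𝐱 − 𝐲‖² ≤ Φ ≤ ε₆(‖𝐱‖²_𝐄 + ‖𝐰‖²_𝐅 + ‖𝐱 − 𝐲‖²)`;
in particular `Φ ≥ 0`. -/
theorem stmt14
    {n p : ℕ} (hn : 2 ≤ n) (hp : 1 ≤ p)
    -- the Laplacian of a connected undirected weighted graph, with its
    -- orthogonal eigen-decomposition `L = U diag(λ) Uᵀ`, `0 = λ₁ < λ₂ ≤ … ≤ λₙ`,
    -- and first eigenvector `q = 𝟙/√n`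
    (L : Matrix (Fin n) (Fin n) ℝ) (hLsymm : L.IsSymm)
    (hLoffdiag : ∀ i j : Fin n, i ≠ j → L i j ≤ 0)
    (hLrows : ∀ i : Fin n, ∑ j, L i j = 0)
    (lam : Fin n → ℝ) (U : Matrix (Fin n) (Fin n) ℝ)
    (hUorth : U.transpose * U = 1)
    (hLdecomp : L = U * Matrix.diagonal lam * U.transpose)
    (hq0 : ∀ i : Fin n, U i ⟨0, by omega⟩ = 1 / Real.sqrt n)
    (hlam0 : lam ⟨0, by omega⟩ = 0)
    (hlamMono : Monotone lam)
    (hlam2pos : 0 < lam ⟨1, by omega⟩)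
    -- the constant `λ_{n+1} ∈ [λ₂, λₙ]` and the matrix `F_M`
    (lamE : ℝ) (hlamE : lam ⟨1, by omega⟩ ≤ lamE ∧ lamE ≤ lam ⟨n - 1, by omega⟩)
    (FM : Matrix (Fin n) (Fin n) ℝ)
    (hFM : FM = U * Matrix.diagonal (fun i => if i.val = 0 then lamE⁻¹ else (lam i)⁻¹) *
      U.transpose)
    -- `ρ₂(L) = λ₂`
    (ρ₂ : ℝ) (hρ₂ : ρ₂ = lam ⟨1, by omega⟩)
    (ϵ₁ : ℝ) (hϵ₁pos : 0 < ϵ₁) (hϵ₁ : 1 < ϵ₁ * ρ₂)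
    (ε₆ ε₇ : ℝ)
    (hε₇ : ε₇ = (ϵ₁ * ρ₂ - 1) / (2 * ϵ₁ * ρ₂))
    (hε₆ : ε₆ = max ((1 + ϵ₁ * ρ₂) / 2) ((1 + ϵ₁) / 2 + 1 / (2 * ϵ₁ * ρ₂ ^ 2))) :
    ∀ X W Y : Fin n → Vec p,
      (ε₇ * (wnorm (Emat n) X + wnorm FM W) + sqnorm (fun i => X i - Y i) ≤
          (2 : ℝ)⁻¹ * wnorm (Emat n) X + ((1 + ϵ₁) / 2) * wnorm FM W
            + bform (Emat n * FM) X W + sqnorm (fun i => X i - Y i)) ∧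
      ((2 : ℝ)⁻¹ * wnorm (Emat n) X + ((1 + ϵ₁) / 2) * wnorm FM W
            + bform (Emat n * FM) X W + sqnorm (fun i => X i - Y i) ≤
          ε₆ * (wnorm (Emat n) X + wnorm FM W + sqnorm (fun i => X i - Y i))) ∧
      0 ≤ (2 : ℝ)⁻¹ * wnorm (Emat n) X + ((1 + ϵ₁) / 2) * wnorm FM W
            + bform (Emat n * FM) X W + sqnorm (fun i => X i - Y i) := by
  intro X W Y
  set i0 : Fin n := ⟨0, by omega⟩ with hi0
  set i1 : Fin n := ⟨1, by omega⟩ with hi1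
  -- basic positivity facts
  have hρpos : 0 < ρ₂ := hρ₂ ▸ hlam2pos
  have hlamEpos : 0 < lamE := lt_of_lt_of_le hlam2pos hlamE.1
  have hle1 : ∀ k : Fin n, k ≠ i0 → i1 ≤ k := by
    intro k hk
    have hv : (k : ℕ) ≠ 0 := fun h => hk (Fin.ext h)
    have h1 : (i1 : ℕ) = 1 := rfl
    rw [Fin.le_def, h1]
    omega
  have hlamkpos : ∀ k : Fin n, k ≠ i0 → 0 < lam k := fun k hk =>
    lt_of_lt_of_le hlam2pos (hlamMono (hle1 k hk))
  have hμρ : ∀ k : Fin n, k ≠ i0 → (lam k)⁻¹ * ρ₂ ≤ 1 := by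
    intro k hk
    have hpos := hlamkpos k hk
    have h1 : ρ₂ ≤ lam k := by
      rw [hρ₂]
      exact hlamMono (hle1 k hk)
    calc (lam k)⁻¹ * ρ₂ ≤ (lam k)⁻¹ * lam k :=
          mul_le_mul_of_nonneg_left h1 (inv_nonneg.mpr hpos.le)
      _ = 1 := inv_mul_cancel₀ (ne_of_gt hpos)
  -- constants δ and γ
  have h2ρ : (0:ℝ) < 2 * ϵ₁ * ρ₂ := by positivity
  have h2ρ2 : (0:ℝ) < 2 * ϵ₁ * ρ₂ ^ 2 := by positivity
  set δ : ℝ := (2 * ϵ₁ * ρ₂)⁻¹ with hδdef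
  set γ : ℝ := (2 * ϵ₁ * ρ₂ ^ 2)⁻¹ with hγdef
  have hδ : δ * (2 * ϵ₁ * ρ₂) = 1 := inv_mul_cancel₀ (ne_of_gt h2ρ)
  have hγ : γ * (2 * ϵ₁ * ρ₂ ^ 2) = 1 := inv_mul_cancel₀ (ne_of_gt h2ρ2)
  have hδpos : 0 < δ := by positivity
  have hγpos : 0 < γ := by positivity
  have hε₇δ : ε₇ = 1/2 - δ := by
    rw [hε₇, hδdef]
    field_simp
  have hε₇pos : 0 ≤ ε₇ := by
    have : δ ≤ 1/2 := by nlinarith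
    linarith
  have hmax1 : (1 + ϵ₁ * ρ₂) / 2 ≤ ε₆ := hε₆ ▸ le_max_left _ _
  have hmax2 : (1 + ϵ₁) / 2 + γ ≤ ε₆ := by
    have h := hε₆ ▸ le_max_right ((1 + ϵ₁ * ρ₂) / 2) ((1 + ϵ₁) / 2 + 1 / (2 * ϵ₁ * ρ₂ ^ 2))
    rwa [one_div] at h
  have hε₆ge1 : 1 ≤ ε₆ := by linarith
  -- spectral data
  have hUU : U * U.transpose = 1 := mul_eq_one_comm.mp hUorth
  set e : Fin n → ℝ := fun k => if k = i0 then (0:ℝ) else 1 with he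
  set f : Fin n → ℝ := fun k => if k = i0 then lamE⁻¹ else (lam k)⁻¹ with hf
  have hEdec : Emat n = U * Matrix.diagonal e * U.transpose :=
    aux_Emat_eq U hUU i0 hq0
  have hFdec : FM = U * Matrix.diagonal f * U.transpose := by
    have hfun : (fun i : Fin n => if (i : ℕ) = 0 then lamE⁻¹ else (lam i)⁻¹) = f := by
      funext k
      by_cases h : k = i0
      · simp [hf, h, hi0]
      · have hv : (k : ℕ) ≠ 0 := fun hv => h (Fin.ext hv)
        simp [hf, h, hv]
    rw [hFM, hfun]
  set a : Fin n → Vec p := fun k => ∑ i, U i k • X i with ha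
  set b : Fin n → Vec p := fun k => ∑ i, U i k • W i with hb
  have hSE : wnorm (Emat n) X = ∑ k, e k * ‖a k‖ ^ 2 := by
    rw [wnorm, hEdec, aux_bform_spectral]
    exact Finset.sum_congr rfl fun k _ => by
      rw [real_inner_self_eq_norm_sq]
  have hSF : wnorm FM W = ∑ k, f k * ‖b k‖ ^ 2 := by
    rw [wnorm, hFdec, aux_bform_spectral]
    exact Finset.sum_congr rfl fun k _ => by
      rw [real_inner_self_eq_norm_sq]
  have hC : bform (Emat n * FM) X W = ∑ k, (e k * f k) * ⟪a k, b k⟫ := by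
    rw [hEdec, hFdec, aux_prod_spectral U hUorth, aux_bform_spectral]
  -- nonnegativity of the pieces
  have hSEnn : 0 ≤ wnorm (Emat n) X := by
    rw [hSE]
    refine Finset.sum_nonneg fun k _ => ?_
    by_cases h : k = i0 <;>
      simp [he, h, sq_nonneg]
  have hSFnn : 0 ≤ wnorm FM W := by
    rw [hSF]
    refine Finset.sum_nonneg fun k _ => ?_
    by_cases h : k = i0
    · simp only [hf, h, if_true]
      positivity
    · simp only [hf, h, if_false]
      have := hlamkpos k h
      positivity
  have hsqnn : 0 ≤ sqnorm (fun i => X i - Y i) :=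
    Finset.sum_nonneg fun i _ => sq_nonneg _
  -- per-index inequalities
  have hinner : ∀ k, |⟪a k, b k⟫| ≤ ‖a k‖ * ‖b k‖ := fun k => abs_real_inner_le_norm _ _
  have keyLow : ∀ k : Fin n,
      ε₇ * (e k * ‖a k‖ ^ 2) + ε₇ * (f k * ‖b k‖ ^ 2) ≤
        (2:ℝ)⁻¹ * (e k * ‖a k‖ ^ 2) + ((1 + ϵ₁) / 2) * (f k * ‖b k‖ ^ 2)
          + (e k * f k) * ⟪a k, b k⟫ := by
    intro k
    by_cases h : k = i0
    · simp only [he, hf, h, if_true]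
      have hB2 : 0 ≤ lamE⁻¹ * ‖b i0‖ ^ 2 := by positivity
      have hle : ε₇ ≤ (1 + ϵ₁) / 2 := by
        rw [hε₇δ]; linarith
      have := mul_le_mul_of_nonneg_right hle hB2
      simp only [zero_mul, mul_zero]
      linarith
    · simp only [he, hf, h, if_false, one_mul]
      have hμpos := hlamkpos k h
      have hμinv : 0 < (lam k)⁻¹ := by positivity
      have hc : -(‖a k‖ * ‖b k‖) ≤ ⟪a k, b k⟫ := by
        have h1 := hinner k
        have h2 := neg_abs_le (⟪a k, b k⟫)
        linarith
      have := aux_lower_term ϵ₁ ρ₂ ((lam k)⁻¹) (‖a k‖) (‖b k‖) (⟪a k, b k⟫) δ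
        hϵ₁pos hρpos hμinv (hμρ k h) hc hδ
      rw [hε₇δ]
      have h2inv : (2:ℝ)⁻¹ = 1/2 := by norm_num
      rw [h2inv]
      linarith [this]
  have keyUp : ∀ k : Fin n,
      (2:ℝ)⁻¹ * (e k * ‖a k‖ ^ 2) + ((1 + ϵ₁) / 2) * (f k * ‖b k‖ ^ 2)
          + (e k * f k) * ⟪a k, b k⟫ ≤
        ε₆ * (e k * ‖a k‖ ^ 2) + ε₆ * (f k * ‖b k‖ ^ 2) := by
    intro k
    by_cases h : k = i0
    · simp only [he, hf, h, if_true]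
      have hB2 : 0 ≤ lamE⁻¹ * ‖b i0‖ ^ 2 := by positivity
      have hle : (1 + ϵ₁) / 2 ≤ ε₆ := by linarith
      have := mul_le_mul_of_nonneg_right hle hB2
      simp only [zero_mul, mul_zero]
      linarith
    · simp only [he, hf, h, if_false, one_mul]
      have hμpos := hlamkpos k h
      have hμinv : 0 < (lam k)⁻¹ := by positivity
      have hc : ⟪a k, b k⟫ ≤ ‖a k‖ * ‖b k‖ := le_of_abs_le (hinner k)
      have := aux_upper_term ϵ₁ ρ₂ ((lam k)⁻¹) (‖a k‖) (‖b k‖) (⟪a k, b k⟫) γ ε₆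
        hϵ₁pos hρpos hμinv (hμρ k h) hc hγ hmax1 hmax2
      have h2inv : (2:ℝ)⁻¹ = 1/2 := by norm_num
      rw [h2inv]
      linarith [this]
  -- sum the per-index inequalities
  have hsumLow := Finset.sum_le_sum (fun k (_ : k ∈ Finset.univ) => keyLow k)
  have hsumUp := Finset.sum_le_sum (fun k (_ : k ∈ Finset.univ) => keyUp k)
  simp only [Finset.sum_add_distrib, ← Finset.mul_sum] at hsumLow hsumUp
  rw [hSE, hSF, hC]
  constructor
  · linarith [hsumLow]
  constructor
  · have hsq : sqnorm (fun i => X i - Y i) ≤ ε₆ * sqnorm (fun i => X i - Y i) := by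
      calc sqnorm (fun i => X i - Y i) = 1 * sqnorm (fun i => X i - Y i) := (one_mul _).symm
        _ ≤ ε₆ * sqnorm (fun i => X i - Y i) :=
            mul_le_mul_of_nonneg_right hε₆ge1 hsqnn
    linarith [hsumUp, hsq]
  · have hXW : 0 ≤ ε₇ * ((∑ k, e k * ‖a k‖ ^ 2) + ∑ k, f k * ‖b k‖ ^ 2) := by
      apply mul_nonneg hε₇pos
      rw [hSE] at hSEnn
      rw [hSF] at hSFnn
      linarith
    linarith [hsumLow, hXW, hsqnn]
end
end
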